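/- Let Φ > 0, c ∈ (0,1], h > 0, Δt > 0, p ∈ ℕ, and suppose (c h)/(Δt (p+1)(p+2)) > (max{1,Φ} + √Φ)/2. Then with ε := ((2ch)/(Δt(p+1)(p+2)) + √Φ)/(max{1,Φ} + √Φ), one has ε > 0 and the quantity C := A/B₁ with A = (max{1,Φ}+√Φ)/(4ε) and B₁ = (ch)/(Δt(p+1)(p+2)) + (2√Φ − (max{1,Φ}+√Φ)ε)/4 satisfies B₁ > 0 and C < 1. -/
import Mathlib


open Real

/-- Explicit choice of ε making the iHDG-II contraction factor for the
linearized shallow water system strictly less than 1. -/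
theorem shallow_water_contraction_factor
    (Φ c h Δt : ℝ) (p : ℕ)
    (hΦ : 0 < Φ) (hc0 : 0 < c) (hc1 : c ≤ 1) (hh : 0 < h) (hΔt : 0 < Δt)
    (hcond : (c * h) / (Δt * ((p : ℝ) + 1) * ((p : ℝ) + 2))
              > (max 1 Φ + Real.sqrt Φ) / 2) :
    let ε := ((2 * c * h) / (Δt * ((p : ℝ) + 1) * ((p : ℝ) + 2)) + Real.sqrt Φ)
               / (max 1 Φ + Real.sqrt Φ)
    let A := (max 1 Φ + Real.sqrt Φ) / (4 * ε)
    let B₁ := (c * h) / (Δt * ((p : ℝ) + 1) * ((p : ℝ) + 2))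
                + (2 * Real.sqrt Φ - (max 1 Φ + Real.sqrt Φ) * ε) / 4
    0 < ε ∧ 0 < B₁ ∧ A / B₁ < 1 := by
  intro ε A B₁
  have hs : 0 < Real.sqrt Φ := Real.sqrt_pos.2 hΦ
  have hM : 0 < max 1 Φ + Real.sqrt Φ := by
    have := le_max_left 1 Φ; linarith
  have hD : 0 < Δt * ((p : ℝ) + 1) * ((p : ℝ) + 2) := by positivity
  set s := Real.sqrt Φ with hsdef
  set M := max 1 Φ + s with hMdef
  set D := Δt * ((p : ℝ) + 1) * ((p : ℝ) + 2) with hDdef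
  set K := c * h / D with hKdef
  have hK : 0 < K := div_pos (by positivity) hD
  have hεd : ε = (2 * c * h / D + s) / M := rfl
  have hAd : A = M / (4 * ε) := rfl
  have hBd : B₁ = K + (2 * s - M * ε) / 4 := rfl
  have h2K : 2 * c * h / D = 2 * K := by rw [hKdef]; ring
  have hε : ε = (2 * K + s) / M := by rw [hεd, h2K]
  have hεpos : 0 < ε := by rw [hε]; exact div_pos (by linarith) hM
  have hε1 : 1 < ε := by
    rw [hε, lt_div_iff₀ hM]
    linarith [hcond]
  have hMε : M * ε = 2 * K + s := by
    rw [hε]; field_simp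
  have hB : B₁ = (2 * K + s) / 4 := by rw [hBd, hMε]; ring
  have hBpos : 0 < B₁ := by rw [hB]; linarith
  refine ⟨hεpos, hBpos, ?_⟩
  rw [div_lt_one hBpos, hAd, hB, div_lt_div_iff₀ (by positivity) (by norm_num)]
  nlinarith [hMε, mul_pos hM hεpos, hε1, mul_pos (mul_pos hM hεpos) hεpos]
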